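/- Let C be a Griesmer [g_q(k,d),k,d] code over F_q with k ≥ 2 and let a be a codeword of minimum weight d. Then the residual code Res(C,a) is a Griesmer [g_q(k−1,⌈d/q⌉), k−1, ⌈d/q⌉] code. -/

import Mathlib

/-- Hamming weight of a vector. -/
noncomputable def wt {ι F : Type*} [Zero F] (c : ι → F) : ℕ :=
  Nat.card {i // c i ≠ 0}

/-- Griesmer sum `g_q(k,d) = ∑_{i<k} ⌈d / q^i⌉` (using `(d + q^i - 1)/q^i`). -/
def gbound (q k d : ℕ) : ℕ :=
  ∑ i ∈ Finset.range k, (d + q ^ i - 1) / q ^ i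

/-!
Restricting `C` to the zeros of a minimum-weight word `a` kills exactly the line `F ∙ a`: a codeword
vanishing off `supp a` that is not a multiple of `a` can be shifted by a multiple of `a` to a nonzero
word of smaller support. So the residual code has dimension `k - 1`. Averaging the weights of the
`q` codewords `c - λ • a` gives `d ≤ q · wt (c restricted to the zeros of a)`, so the residual
minimum distance is at least `⌈d/q⌉`. Induction on this is the Griesmer bound; the residual code has
length `g_q(k, d) - d = g_q(k - 1, ⌈d/q⌉)`, and as `g_q(k - 1, ·)` is strictly increasing, the
Griesmer bound forces its minimum distance to be exactly `⌈d/q⌉`.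
-/

open Finset

lemma Nat.ceilDiv_ceilDiv {d A B : ℕ} (hA : 0 < A) (hB : 0 < B) :
    d ⌈/⌉ A ⌈/⌉ B = d ⌈/⌉ (A * B) :=
  eq_of_forall_ge_iff fun x => by
    rw [ceilDiv_le_iff_le_mul hB, ceilDiv_le_iff_le_mul hA, ceilDiv_le_iff_le_mul (by positivity),
      mul_assoc]

lemma gbound_eq_sum_ceilDiv (q k d : ℕ) : gbound q k d = ∑ i ∈ range k, d ⌈/⌉ q ^ i := rfl

lemma gbound_zero_right (q k : ℕ) : gbound q k 0 = 0 := by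
  simp [gbound_eq_sum_ceilDiv]

lemma gbound_succ {q : ℕ} (hq : 0 < q) (k d : ℕ) :
    gbound q (k + 1) d = d + gbound q k (d ⌈/⌉ q) := by
  simp only [gbound_eq_sum_ceilDiv, sum_range_succ', pow_zero, ceilDiv_one, add_comm d, pow_succ',
    Nat.ceilDiv_ceilDiv hq (pow_pos hq _)]

lemma gbound_mono (q k : ℕ) : Monotone (gbound q k) := fun _ _ h =>
  sum_le_sum fun _ _ => Nat.div_le_div_right (by omega)

lemma gbound_strictMono {q k : ℕ} (hq : 0 < q) (hk : k ≠ 0) : StrictMono (gbound q k) := by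
  obtain ⟨k, rfl⟩ := Nat.exists_eq_succ_of_ne_zero hk
  refine strictMono_nat_of_lt_succ fun d => ?_
  rw [gbound_succ hq, gbound_succ hq]
  have := gbound_mono q k (show d ⌈/⌉ q ≤ (d + 1) ⌈/⌉ q from Nat.div_le_div_right (by omega))
  omega

lemma card_filter_sub_mul_ne_zero {F : Type*} [Field F] [Fintype F] [DecidableEq F] (x : F) {y : F} (hy : y ≠ 0) :
    #{l : F | x - l * y ≠ 0} = Fintype.card F - 1 := by
  have : univ.filter (fun l : F => x - l * y ≠ 0) = univ.filter (· ≠ x / y) := by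
    ext l
    simp [sub_eq_zero, eq_div_iff hy, eq_comm]
  rw [this, filter_ne', card_erase_of_mem (mem_univ _), card_univ]

section Weight

variable {ι F : Type*} [Zero F]

lemma wt_zero : wt (0 : ι → F) = 0 := by
  simp [wt]

variable [Fintype ι]

lemma wt_eq_card_filter [DecidableEq F] (c : ι → F) : wt c = #{i | c i ≠ 0} := by
  rw [wt, Nat.card_eq_fintype_card, Fintype.card_subtype]

lemma card_zeros_add_wt (c : ι → F) :
    Nat.card {i // c i = 0} + wt c = Fintype.card ι := by
  classical
  rw [wt_eq_card_filter, Nat.card_eq_fintype_card, Fintype.card_subtype]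
  exact card_filter_add_card_filter_not _

end Weight

section Residual

variable {ι F : Type*} [Field F]

def residualCode (C : Submodule F (ι → F)) (a : ι → F) : Submodule F ({i // a i = 0} → F) :=
  C.map (LinearMap.funLeft F F Subtype.val)

lemma funLeft_zeros_self (a : ι → F) :
    LinearMap.funLeft F F (Subtype.val : {i // a i = 0} → ι) a = 0 :=
  funext fun i => i.2

lemma exists_wt_le_of_ne_bot {C : Submodule F (ι → F)} (hC : C ≠ ⊥) :
    ∃ a ∈ C, a ≠ 0 ∧ ∀ c ∈ C, c ≠ 0 → wt a ≤ wt c := by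
  obtain ⟨b, hb⟩ := Submodule.exists_mem_ne_zero_of_ne_bot hC
  let S : Set (ι → F) := {c | c ∈ C ∧ c ≠ 0}
  have hmem := Function.argminOn_mem wt S ⟨b, hb⟩
  exact ⟨_, hmem.1, hmem.2, fun c hc hc0 => Function.argminOn_le wt S (a := c) ⟨hc, hc0⟩⟩

variable [Fintype ι]

lemma wt_funLeft_zeros [DecidableEq F] (a c : ι → F) :
    wt (LinearMap.funLeft F F (Subtype.val : {i // a i = 0} → ι) c) = #{i | a i = 0 ∧ c i ≠ 0} := by
  rw [wt, ← Fintype.card_subtype, ← Nat.card_eq_fintype_card]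
  exact Nat.card_congr ((Equiv.subtypeSubtypeEquivSubtypeInter (fun i => a i = 0) (c · ≠ 0)))

lemma sum_wt_sub_smul [Fintype F] [DecidableEq F] (a c : ι → F) :
    ∑ l : F, wt (c - l • a) =
      Fintype.card F * #{i | a i = 0 ∧ c i ≠ 0} + (Fintype.card F - 1) * wt a := by
  simp only [wt_eq_card_filter, card_filter, mul_sum, ← sum_add_distrib]
  rw [sum_comm]
  refine sum_congr rfl fun i _ => ?_
  by_cases ha : a i = 0
  · simp [ha]
  · rw [← card_filter]
    simpa [ha] using card_filter_sub_mul_ne_zero (c i) ha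

variable {C : Submodule F (ι → F)} {a : ι → F}

lemma exists_eq_smul_of_forall_eq_zero (haC : a ∈ C) (ha : a ≠ 0)
    (hmin : ∀ c ∈ C, c ≠ 0 → wt a ≤ wt c) {c : ι → F} (hc : c ∈ C)
    (hz : ∀ i, a i = 0 → c i = 0) : ∃ l : F, c = l • a := by
  classical
  obtain ⟨i₀, hi₀⟩ : ∃ i, a i ≠ 0 := Function.ne_iff.mp ha
  refine ⟨c i₀ / a i₀, sub_eq_zero.mp <| by_contra fun hb => ?_⟩
  set b := c - (c i₀ / a i₀) • a
  have hsupp : #{i | b i ≠ 0} < #{i | a i ≠ 0} := by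
    refine card_lt_card <| (ssubset_iff_of_subset fun i => ?_).mpr ⟨i₀, ?_⟩
    · simp only [mem_filter, mem_univ, true_and]
      exact mt fun hai => by simp [b, hai, hz i hai]
    · simp [b, hi₀]
  rw [← wt_eq_card_filter, ← wt_eq_card_filter] at hsupp
  exact (hmin b (C.sub_mem hc (C.smul_mem _ haC)) hb).not_gt hsupp

lemma finrank_residualCode_add_one (haC : a ∈ C) (ha : a ≠ 0)
    (hmin : ∀ c ∈ C, c ≠ 0 → wt a ≤ wt c) :
    Module.finrank F (residualCode C a) + 1 = Module.finrank F C := by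
  set f := LinearMap.funLeft F F (Subtype.val : {i // a i = 0} → ι) ∘ₗ C.subtype
  have hrange : LinearMap.range f = residualCode C a := by
    rw [LinearMap.range_comp, Submodule.range_subtype, residualCode]
  have hker : LinearMap.ker f = F ∙ ⟨a, haC⟩ := by
    refine le_antisymm (fun c hc => ?_) ?_
    · obtain ⟨l, hl⟩ := exists_eq_smul_of_forall_eq_zero haC ha hmin c.2
        fun i hi => congrFun (LinearMap.mem_ker.mp hc) ⟨i, hi⟩
      exact Submodule.mem_span_singleton.mpr ⟨l, Subtype.ext hl.symm⟩
    · rw [Submodule.span_singleton_le_iff_mem, LinearMap.mem_ker]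
      exact funLeft_zeros_self a
  have hline : Module.finrank F (F ∙ (⟨a, haC⟩ : C)) = 1 :=
    finrank_span_singleton fun h => ha (congrArg Subtype.val h)
  rw [← hrange, ← hline, ← hker, LinearMap.finrank_range_add_finrank_ker]

variable [Fintype F]

lemma wt_le_card_mul_wt_funLeft_zeros (haC : a ∈ C)
    (hmin : ∀ c ∈ C, c ≠ 0 → wt a ≤ wt c) {c : ι → F} (hc : c ∈ C)
    (hres : LinearMap.funLeft F F (Subtype.val : {i // a i = 0} → ι) c ≠ 0) :
    wt a ≤ Fintype.card F * wt (LinearMap.funLeft F F (Subtype.val : {i // a i = 0} → ι) c) := by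
  classical
  set q := Fintype.card F
  have hq : 0 < q := Fintype.card_pos
  have hlow : ∀ l : F, wt a ≤ wt (c - l • a) := fun l =>
    hmin _ (C.sub_mem hc (C.smul_mem l haC)) fun h => hres <| by
      rw [← sub_add_cancel c (l • a), h, zero_add, map_smul, funLeft_zeros_self, smul_zero]
  have hsum : q * wt a ≤ q * #{i | a i = 0 ∧ c i ≠ 0} + (q - 1) * wt a := by
    calc q * wt a = ∑ _l : F, wt a := by rw [sum_const, card_univ, smul_eq_mul]
      _ ≤ ∑ l : F, wt (c - l • a) := sum_le_sum fun l _ => hlow l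
      _ = _ := sum_wt_sub_smul a c
  rw [Nat.sub_one_mul] at hsum
  rw [wt_funLeft_zeros]
  have : wt a ≤ q * wt a := Nat.le_mul_of_pos_left _ hq
  omega

lemma ceilDiv_card_le_wt_of_mem_residualCode (haC : a ∈ C)
    (hmin : ∀ c ∈ C, c ≠ 0 → wt a ≤ wt c) {c' : {i // a i = 0} → F}
    (hc' : c' ∈ residualCode C a) (hc'0 : c' ≠ 0) :
    wt a ⌈/⌉ Fintype.card F ≤ wt c' := by
  obtain ⟨c, hc, rfl⟩ := hc'
  rw [ceilDiv_le_iff_le_mul Fintype.card_pos]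
  exact wt_le_card_mul_wt_funLeft_zeros haC hmin hc hc'0

end Residual

lemma gbound_le_card_of_le_finrank {F : Type*} [Field F] [Fintype F] (k : ℕ) :
    ∀ {ι : Type*} [Fintype ι] {C : Submodule F (ι → F)} {d : ℕ}, k ≤ Module.finrank F C →
      (∀ c ∈ C, c ≠ 0 → d ≤ wt c) → gbound (Fintype.card F) k d ≤ Fintype.card ι := by
  induction k with
  | zero => simp [gbound]
  | succ k ih =>
    intro ι _ C d hk hmin
    classical
    have hC : C ≠ ⊥ := Submodule.one_le_finrank_iff.mp (by omega)
    obtain ⟨a, haC, ha, hamin⟩ := exists_wt_le_of_ne_bot hC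
    calc gbound (Fintype.card F) (k + 1) d
        ≤ gbound (Fintype.card F) (k + 1) (wt a) := gbound_mono _ _ (hmin a haC ha)
      _ = wt a + gbound (Fintype.card F) k (wt a ⌈/⌉ Fintype.card F) :=
        gbound_succ Fintype.card_pos _ _
      _ ≤ wt a + Fintype.card {i // a i = 0} := by
        gcongr
        refine ih ?_ fun c' hc' hc'0 => ceilDiv_card_le_wt_of_mem_residualCode haC hamin hc' hc'0
        have := finrank_residualCode_add_one haC ha hamin
        omega
      _ = Fintype.card ι := by rw [add_comm, ← Nat.card_eq_fintype_card, card_zeros_add_wt]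

lemma exists_wt_eq_of_card_eq_gbound {ι F : Type*} [Fintype ι] [Field F] [Fintype F]
    {C : Submodule F (ι → F)} {k e : ℕ} (hk : Module.finrank F C = k) (hk0 : k ≠ 0)
    (hcard : Fintype.card ι = gbound (Fintype.card F) k e)
    (hmin : ∀ c ∈ C, c ≠ 0 → e ≤ wt c) : ∃ c ∈ C, c ≠ 0 ∧ wt c = e := by
  have hC : C ≠ ⊥ := Submodule.one_le_finrank_iff.mp (by omega)
  obtain ⟨a, haC, ha, hamin⟩ := exists_wt_le_of_ne_bot hC
  refine ⟨a, haC, ha, le_antisymm ?_ (hmin a haC ha)⟩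
  have := gbound_le_card_of_le_finrank k hk.ge hamin
  rwa [hcard, (gbound_strictMono Fintype.card_pos hk0).le_iff_le] at this

theorem stmt5_general {F : Type*} [Field F] [Fintype F] {n k d : ℕ}
    (C : Submodule F (Fin n → F))
    (hk : Module.finrank F C = k) (hk2 : 2 ≤ k)
    (hn : n = gbound (Fintype.card F) k d)
    (hmin : ∀ c ∈ C, c ≠ 0 → d ≤ wt c)
    (a : Fin n → F) (haC : a ∈ C) (haw : wt a = d) :
    Nat.card {i : Fin n // a i = 0} =
        gbound (Fintype.card F) (k - 1) ((d + Fintype.card F - 1) / Fintype.card F) ∧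
    Module.finrank F
      (C.map (LinearMap.funLeft F F (Subtype.val : {i : Fin n // a i = 0} → Fin n))) = k - 1 ∧
    (∀ c' ∈ C.map (LinearMap.funLeft F F (Subtype.val : {i : Fin n // a i = 0} → Fin n)),
      c' ≠ 0 → (d + Fintype.card F - 1) / Fintype.card F ≤ wt c') ∧
    (∃ c' ∈ C.map (LinearMap.funLeft F F (Subtype.val : {i : Fin n // a i = 0} → Fin n)),
      c' ≠ 0 ∧ wt c' = (d + Fintype.card F - 1) / Fintype.card F) := by
  classical
  subst haw
  obtain ⟨k, rfl⟩ : ∃ m, k = m + 1 := ⟨k - 1, by omega⟩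
  have hd : wt a ≠ 0 := fun h => by
    rw [h, gbound_zero_right] at hn
    subst hn
    simpa [hk] using C.finrank_le
  have ha : a ≠ 0 := fun h => hd (h ▸ wt_zero)
  have hlen : Nat.card {i // a i = 0} = gbound (Fintype.card F) k (wt a ⌈/⌉ Fintype.card F) := by
    have hsplit := card_zeros_add_wt a
    have hsucc := gbound_succ (Fintype.card_pos (α := F)) k (wt a)
    rw [Fintype.card_fin] at hsplit
    omega
  have hdim : Module.finrank F (residualCode C a) = k := by
    have := finrank_residualCode_add_one haC ha hmin
    omega
  have hres : ∀ c' ∈ residualCode C a, c' ≠ 0 → wt a ⌈/⌉ Fintype.card F ≤ wt c' :=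
    fun _ hc' hc'0 => ceilDiv_card_le_wt_of_mem_residualCode haC hmin hc' hc'0
  refine ⟨hlen, hdim, hres, exists_wt_eq_of_card_eq_gbound hdim (by omega) ?_ hres⟩
  rwa [← Nat.card_eq_fintype_card]

theorem stmt5 {F : Type*} [Field F] [Fintype F] {n k d : ℕ}
    (C : Submodule F (Fin n → F))
    (hk : Module.finrank F C = k) (hk2 : 2 ≤ k)
    (hn : n = gbound (Fintype.card F) k d)
    (hmin : ∀ c ∈ C, c ≠ 0 → d ≤ wt c)
    (hex : ∃ c ∈ C, c ≠ 0 ∧ wt c = d)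
    (a : Fin n → F) (haC : a ∈ C) (haw : wt a = d) :
    Nat.card {i : Fin n // a i = 0} =
        gbound (Fintype.card F) (k - 1) ((d + Fintype.card F - 1) / Fintype.card F) ∧
    Module.finrank F
      (C.map (LinearMap.funLeft F F (Subtype.val : {i : Fin n // a i = 0} → Fin n))) = k - 1 ∧
    (∀ c' ∈ C.map (LinearMap.funLeft F F (Subtype.val : {i : Fin n // a i = 0} → Fin n)),
      c' ≠ 0 → (d + Fintype.card F - 1) / Fintype.card F ≤ wt c') ∧
    (∃ c' ∈ C.map (LinearMap.funLeft F F (Subtype.val : {i : Fin n // a i = 0} → Fin n)),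
      c' ≠ 0 ∧ wt c' = (d + Fintype.card F - 1) / Fintype.card F) :=
  stmt5_general C hk hk2 hn hmin a haC haw
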